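/- arXiv:2001.02378 — 2 statements merged into one kernel-verified Lean document; each statement's English description precedes it below -/
import Mathlib

section
/- Let f : ℝ^d → [0,1] be measurable and σ > 0. Define f̂(x) = E_{η ~ N(0, σ²I)} f(x+η). Then the map x ↦ Φ⁻¹(f̂(x)) is (1/σ)-Lipschitz, where Φ is the standard Gaussian CDF. -/
open MeasureTheory Real Set

noncomputable def Phi (x : ℝ) : ℝ :=
  ∫ t in Set.Iic x, (Real.sqrt (2 * Real.pi))⁻¹ * Real.exp (-t ^ 2 / 2)

noncomputable def PhiInv : ℝ → ℝ := Function.invFun Phi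

noncomputable def gaussMeasure (d : ℕ) (σ : ℝ) :
    Measure (EuclideanSpace ℝ (Fin d)) :=
  volume.withDensity fun x =>
    ENNReal.ofReal ((2 * Real.pi * σ ^ 2) ^ (-(d : ℝ) / 2) *
      Real.exp (-‖x‖ ^ 2 / (2 * σ ^ 2)))

/-! Fix `x ≠ y`, `r = ‖y - x‖` and `u = r⁻¹ • (y - x)`. The density of `y + η` relative to that
of `x + η` is an increasing function of `⟪η, u⟫`, so by the Neyman–Pearson lemma, among all tests
`0 ≤ φ ≤ 1` with `E φ(x + η) = f̂(x)`, the half-space test `1{⟪η, u⟫ ≤ a}` minimises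
`E φ(y + η)`. Since `⟪η, u⟫ ~ N(0, σ²)`, the choice `a = σ Φ⁻¹(f̂(x))` gives that test the right
size, and its value at `y` is `Φ((a - r) / σ)`. Hence `Φ(Φ⁻¹(f̂(x)) - r / σ) ≤ f̂(y)`. -/

open scoped RealInnerProductSpace
open ProbabilityTheory

lemma Phi_eq_setIntegral (x : ℝ) : Phi x = ∫ t in Iic x, gaussianPDFReal 0 1 t := by
  simp [Phi, gaussianPDFReal]

lemma Phi_eq_cdf : Phi = cdf (gaussianReal 0 1) := by
  ext x
  rw [cdf_eq_real, measureReal_def, gaussianReal_apply_eq_integral 0 one_ne_zero,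
    ENNReal.toReal_ofReal
      (setIntegral_nonneg measurableSet_Iic fun t _ => gaussianPDFReal_nonneg _ _ _),
    Phi_eq_setIntegral]

lemma Phi_sub_Phi (a b : ℝ) : Phi b - Phi a = ∫ t in a..b, gaussianPDFReal 0 1 t := by
  rw [Phi_eq_setIntegral, Phi_eq_setIntegral]
  exact intervalIntegral.integral_Iic_sub_Iic (integrable_gaussianPDFReal 0 1).integrableOn
    (integrable_gaussianPDFReal 0 1).integrableOn

lemma continuous_Phi : Continuous Phi := by
  have h : Phi = fun x => Phi 0 + ∫ t in (0 : ℝ)..x, gaussianPDFReal 0 1 t := by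
    ext x; rw [← Phi_sub_Phi]; ring
  rw [h]
  exact continuous_const.add ((integrable_gaussianPDFReal 0 1).continuous_primitive 0)

lemma strictMono_Phi : StrictMono Phi := fun a b hab => by
  have := intervalIntegral.intervalIntegral_pos_of_pos
    (integrable_gaussianPDFReal 0 1).intervalIntegrable
    (fun t => gaussianPDFReal_pos 0 1 t one_ne_zero) hab
  linarith [Phi_sub_Phi a b]

lemma Phi_PhiInv {p : ℝ} (hp : p ∈ Ioo (0 : ℝ) 1) : Phi (PhiInv p) = p := by
  refine Function.invFun_eq ?_
  obtain ⟨a, ha⟩ : ∃ a, Phi a < p :=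
    ((Phi_eq_cdf ▸ tendsto_cdf_atBot _).eventually_lt_const hp.1).exists
  obtain ⟨b, hb⟩ : ∃ b, p < Phi b :=
    ((Phi_eq_cdf ▸ tendsto_cdf_atTop _).eventually_const_lt hp.2).exists
  obtain ⟨x, -, hx⟩ := intermediate_value_Icc (strictMono_Phi.lt_iff_lt.1 (ha.trans hb)).le
    continuous_Phi.continuousOn ⟨ha.le, hb.le⟩
  exact ⟨x, hx⟩

lemma cdf_gaussianReal_eq_Phi {σ : ℝ} (hσ : 0 < σ) (a : ℝ) :
    cdf (gaussianReal 0 (σ ^ 2).toNNReal) a = Phi (a / σ) := by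
  have hmap : gaussianReal 0 (σ ^ 2).toNNReal = (gaussianReal 0 1).map (σ * ·) := by
    rw [gaussianReal_map_const_mul]
    congr 1
    · ring
    · ext; simp [sq_nonneg]
  have hpre : (σ * ·) ⁻¹' Iic a = Iic (a / σ) := by
    ext t; simp [le_div_iff₀' hσ]
  rw [Phi_eq_cdf, cdf_eq_real, cdf_eq_real, hmap,
    map_measureReal_apply (measurable_const_mul σ) measurableSet_Iic, hpre]

lemma setIntegral_le_integral_mul_of_neymanPearson {α : Type*} [MeasurableSpace α]
    {μ : Measure α} {p q f : α → ℝ} {S : Set α} {c : ℝ} (hS : MeasurableSet S)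
    (hp : Integrable p μ) (hq : Integrable q μ) (hf : AEStronglyMeasurable f μ)
    (hf01 : ∀ w, f w ∈ Icc (0 : ℝ) 1)
    (hle : ∀ w ∈ S, q w ≤ c * p w) (hge : ∀ w ∉ S, c * p w ≤ q w)
    (hsize : ∫ w, f w * p w ∂μ = ∫ w in S, p w ∂μ) :
    ∫ w in S, q w ∂μ ≤ ∫ w, f w * q w ∂μ := by
  have hfbdd : ∀ᵐ w ∂μ, ‖f w‖ ≤ 1 :=
    ae_of_all _ fun w => abs_le.2 ⟨by linarith [(hf01 w).1], (hf01 w).2⟩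
  have hfp := hp.bdd_mul hf hfbdd
  have hfq := hq.bdd_mul hf hfbdd
  have hnonneg :
      0 ≤ ∫ w, (f w * q w - S.indicator q w) - c * (f w * p w - S.indicator p w) ∂μ := by
    refine integral_nonneg fun w => ?_
    by_cases hw : w ∈ S
    · simp only [Pi.zero_apply, indicator_of_mem hw]
      nlinarith [mul_nonneg (sub_nonneg.2 (hf01 w).2) (sub_nonneg.2 (hle w hw))]
    · simp only [Pi.zero_apply, indicator_of_notMem hw]
      nlinarith [mul_nonneg (hf01 w).1 (sub_nonneg.2 (hge w hw))]
  rw [integral_sub, integral_const_mul, integral_sub hfq (hq.indicator hS),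
    integral_sub hfp (hp.indicator hS), integral_indicator hS, integral_indicator hS,
    hsize] at hnonneg
  · linarith
  · exact hfq.sub (hq.indicator hS)
  · exact ((hfp.sub (hp.indicator hS)).const_mul c)

section gaussDensity

variable {d : ℕ} {σ : ℝ}

noncomputable def gaussDensity (d : ℕ) (σ : ℝ) (x : EuclideanSpace ℝ (Fin d)) : ℝ :=
  (2 * π * σ ^ 2) ^ (-(d : ℝ) / 2) * exp (-‖x‖ ^ 2 / (2 * σ ^ 2))

lemma gaussDensity_nonneg (x : EuclideanSpace ℝ (Fin d)) : 0 ≤ gaussDensity d σ x := by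
  unfold gaussDensity; positivity

lemma measurable_gaussDensity : Measurable (gaussDensity d σ) := by
  unfold gaussDensity; fun_prop

lemma gaussMeasure_eq_withDensity :
    gaussMeasure d σ = volume.withDensity fun x => ENNReal.ofReal (gaussDensity d σ x) := rfl

lemma integral_gaussMeasure_comp_add (g : EuclideanSpace ℝ (Fin d) → ℝ)
    (v : EuclideanSpace ℝ (Fin d)) :
    ∫ η, g (v + η) ∂gaussMeasure d σ = ∫ w, g w * gaussDensity d σ (w - v) := by
  rw [gaussMeasure_eq_withDensity, integral_withDensity_eq_integral_toReal_smul
    measurable_gaussDensity.ennreal_ofReal (ae_of_all _ fun _ => ENNReal.ofReal_lt_top),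
    ← integral_add_right_eq_self (fun w => g w * gaussDensity d σ (w - v)) v]
  simp [ENNReal.toReal_ofReal (gaussDensity_nonneg _), add_comm, mul_comm]

lemma gaussDensity_toLp (w : Fin d → ℝ) :
    gaussDensity d σ (WithLp.toLp 2 w) = ∏ i, gaussianPDFReal 0 (σ ^ 2).toNNReal (w i) := by
  have hC : 0 ≤ 2 * π * σ ^ 2 := by positivity
  simp only [gaussDensity, gaussianPDFReal, Real.coe_toNNReal _ (sq_nonneg σ),
    EuclideanSpace.real_norm_sq_eq, sub_zero, Finset.prod_mul_distrib, ← Real.exp_sum,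
    Finset.prod_const, Finset.card_univ, Fintype.card_fin, Real.sqrt_eq_rpow,
    ← Real.rpow_neg hC, ← Real.rpow_mul_natCast hC, Finset.sum_div, ← Finset.sum_neg_distrib,
    neg_div]
  congr 2; ring

lemma integrable_gaussDensity : Integrable (gaussDensity d σ) := by
  rw [← (PiLp.volume_preserving_toLp (Fin d)).integrable_comp_emb
    (MeasurableEquiv.toLp 2 (Fin d → ℝ)).measurableEmbedding]
  simp_rw [Function.comp_def, gaussDensity_toLp]
  exact Integrable.fintype_prod fun _ => integrable_gaussianPDFReal _ _

lemma integral_comp_linearIsometryEquiv_mul_gaussDensity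
    (e : EuclideanSpace ℝ (Fin d) ≃ₗᵢ[ℝ] EuclideanSpace ℝ (Fin d))
    (F : EuclideanSpace ℝ (Fin d) → ℝ) :
    ∫ w, F (e w) * gaussDensity d σ w = ∫ w, F w * gaussDensity d σ w := by
  have hdens : ∀ w, gaussDensity d σ (e w) = gaussDensity d σ w := by
    simp only [gaussDensity, LinearIsometryEquiv.norm_map, implies_true]
  calc ∫ w, F (e w) * gaussDensity d σ w = ∫ w, F (e w) * gaussDensity d σ (e w) := by
        simp only [hdens]
    _ = ∫ w, F w * gaussDensity d σ w :=
        e.measurePreserving.integral_comp e.toHomeomorph.measurableEmbedding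
          (fun w => F w * gaussDensity d σ w)

lemma integral_comp_eval_mul_gaussDensity (hσ : σ ≠ 0) (i : Fin d) (g : ℝ → ℝ) :
    ∫ w, g (w i) * gaussDensity d σ w = ∫ t, g t ∂gaussianReal 0 (σ ^ 2).toNNReal := by
  have hv : (σ ^ 2).toNNReal ≠ 0 := (Real.toNNReal_pos.2 (by positivity)).ne'
  let F : Fin d → ℝ → ℝ := fun j t =>
    (if j = i then g t else 1) * gaussianPDFReal 0 (σ ^ 2).toNNReal t
  have hprod : ∀ w : Fin d → ℝ,
      g (w i) * gaussDensity d σ (WithLp.toLp 2 w) = ∏ j, F j (w j) := by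
    intro w
    rw [gaussDensity_toLp, Finset.prod_mul_distrib, Finset.prod_ite_eq' Finset.univ i,
      if_pos (Finset.mem_univ i)]
  have hfactor : ∀ j,
      ∫ t, F j t = if j = i then ∫ t, g t ∂gaussianReal 0 (σ ^ 2).toNNReal else 1 := by
    intro j
    split_ifs with hj
    · simp [F, hj, integral_gaussianReal_eq_integral_smul hv, mul_comm]
    · simp [F, hj, integral_gaussianPDFReal_eq_one 0 hv]
  rw [← (PiLp.volume_preserving_toLp (Fin d)).integral_comp
    (MeasurableEquiv.toLp 2 (Fin d → ℝ)).measurableEmbedding]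
  simp_rw [hprod, integral_fintype_prod_volume_eq_prod, hfactor]
  rw [Finset.prod_ite_eq' Finset.univ i, if_pos (Finset.mem_univ i)]

lemma integral_comp_inner_mul_gaussDensity (hσ : σ ≠ 0) {u : EuclideanSpace ℝ (Fin d)}
    (hu : ‖u‖ = 1) (g : ℝ → ℝ) :
    ∫ w, g ⟪w, u⟫ * gaussDensity d σ w = ∫ t, g t ∂gaussianReal 0 (σ ^ 2).toNNReal := by
  obtain ⟨i⟩ : Nonempty (Fin d) := by
    by_contra h
    rw [not_nonempty_iff] at h
    simp [Subsingleton.elim u 0] at hu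
  set e : EuclideanSpace ℝ (Fin d) := EuclideanSpace.single i 1
  set R := Submodule.reflection (ℝ ∙ (u - e))ᗮ
  have hRu : R u = e := Submodule.reflection_sub (by simp [e, hu])
  have hinner : ∀ w, ⟪w, u⟫ = R w i := fun w => by
    rw [← R.inner_map_map, hRu, EuclideanSpace.inner_single_right]
    simp
  simp_rw [hinner]
  rw [integral_comp_linearIsometryEquiv_mul_gaussDensity R (fun w => g (w i)),
    integral_comp_eval_mul_gaussDensity hσ i]

lemma setIntegral_inner_le_gaussDensity_sub_smul (hσ : 0 < σ) {u : EuclideanSpace ℝ (Fin d)}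
    (hu : ‖u‖ = 1) (a r : ℝ) :
    ∫ w in {w | ⟪w, u⟫ ≤ a}, gaussDensity d σ (w - r • u) = Phi ((a - r) / σ) := by
  have hshift : ∀ w,
      {w | ⟪w, u⟫ ≤ a}.indicator (fun w => gaussDensity d σ (w - r • u)) (w + r • u) =
        (Iic (a - r)).indicator 1 ⟪w, u⟫ * gaussDensity d σ w := fun w => by
    simp [indicator, inner_add_left, real_inner_smul_left, hu, le_sub_iff_add_le]
  rw [← integral_indicator (measurableSet_le (by fun_prop) measurable_const),
    ← integral_add_right_eq_self _ (r • u)]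
  simp_rw [hshift]
  rw [integral_comp_inner_mul_gaussDensity hσ.ne' hu, integral_indicator_one measurableSet_Iic,
    ← cdf_eq_real, cdf_gaussianReal_eq_Phi hσ]

lemma gaussDensity_sub_smul {u : EuclideanSpace ℝ (Fin d)} (hu : ‖u‖ = 1) (r : ℝ)
    (w : EuclideanSpace ℝ (Fin d)) :
    gaussDensity d σ (w - r • u) =
      exp ((2 * r * ⟪w, u⟫ - r ^ 2) / (2 * σ ^ 2)) * gaussDensity d σ w := by
  rw [gaussDensity, gaussDensity, norm_sub_sq_real, real_inner_smul_right, norm_smul, hu,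
    Real.norm_eq_abs, mul_one, sq_abs, mul_left_comm (exp _), ← exp_add]
  congr 2
  ring

lemma gaussDensity_sub_smul_le_of_inner_le {u : EuclideanSpace ℝ (Fin d)}
    (hu : ‖u‖ = 1) {r a : ℝ} (hr : 0 ≤ r) {w : EuclideanSpace ℝ (Fin d)} (hw : ⟪w, u⟫ ≤ a) :
    gaussDensity d σ (w - r • u) ≤
      exp ((2 * r * a - r ^ 2) / (2 * σ ^ 2)) * gaussDensity d σ w := by
  rw [gaussDensity_sub_smul hu]
  gcongr
  exact gaussDensity_nonneg w

lemma exp_mul_gaussDensity_le_of_le_inner {u : EuclideanSpace ℝ (Fin d)}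
    (hu : ‖u‖ = 1) {r a : ℝ} (hr : 0 ≤ r) {w : EuclideanSpace ℝ (Fin d)} (hw : a ≤ ⟪w, u⟫) :
    exp ((2 * r * a - r ^ 2) / (2 * σ ^ 2)) * gaussDensity d σ w ≤
      gaussDensity d σ (w - r • u) := by
  rw [gaussDensity_sub_smul hu]
  gcongr
  exact gaussDensity_nonneg w

end gaussDensity

lemma PhiInv_smoothed_sub_le {d : ℕ} {σ : ℝ} (hσ : 0 < σ)
    {f : EuclideanSpace ℝ (Fin d) → ℝ} (hf : Measurable f) (hf01 : ∀ x, f x ∈ Icc (0 : ℝ) 1)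
    {fhat : EuclideanSpace ℝ (Fin d) → ℝ}
    (hfhat : ∀ x, fhat x = ∫ η, f (x + η) ∂gaussMeasure d σ)
    (hrange : ∀ x, fhat x ∈ Ioo (0 : ℝ) 1) (x y : EuclideanSpace ℝ (Fin d)) :
    PhiInv (fhat x) - PhiInv (fhat y) ≤ ‖x - y‖ / σ := by
  rcases eq_or_ne x y with rfl | hxy
  · simp
  set r := ‖y - x‖
  have hr : 0 < r := norm_pos_iff.2 (sub_ne_zero.2 hxy.symm)
  set u := r⁻¹ • (y - x)
  have hu : ‖u‖ = 1 := by rw [norm_smul, norm_inv, norm_norm, inv_mul_cancel₀ hr.ne']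
  have hy : y = x + r • u := by simp [u, smul_smul, hr.ne']
  set a := σ * PhiInv (fhat x)
  set S := {w : EuclideanSpace ℝ (Fin d) | ⟪w, u⟫ ≤ a}
  have hsize : ∫ w, f (x + w) * gaussDensity d σ w = ∫ w in S, gaussDensity d σ w :=
    calc ∫ w, f (x + w) * gaussDensity d σ w = fhat x := by
          simpa [hfhat] using (integral_gaussMeasure_comp_add (fun w => f (x + w)) 0).symm
      _ = Phi ((a - 0) / σ) := by
          rw [sub_zero, mul_div_cancel_left₀ _ hσ.ne', Phi_PhiInv (hrange x)]
      _ = ∫ w in S, gaussDensity d σ w := by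
          simpa using (setIntegral_inner_le_gaussDensity_sub_smul hσ hu a 0).symm
  have hshift : ∫ w, f (x + w) * gaussDensity d σ (w - r • u) = fhat y := by
    simpa only [hfhat, hy, add_assoc] using
      (integral_gaussMeasure_comp_add (fun w => f (x + w)) (r • u)).symm
  have hNP := setIntegral_le_integral_mul_of_neymanPearson (f := fun w => f (x + w))
    (measurableSet_le (by fun_prop) measurable_const) integrable_gaussDensity
    (integrable_gaussDensity.comp_sub_right _)
    (hf.comp (measurable_const_add x)).aestronglyMeasurable (fun w => hf01 _)
    (fun w hw => gaussDensity_sub_smul_le_of_inner_le hu hr.le hw)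
    (fun w hw => exp_mul_gaussDensity_le_of_le_inner hu hr.le (not_le.1 hw).le) hsize
  rw [setIntegral_inner_le_gaussDensity_sub_smul hσ hu, hshift, ← Phi_PhiInv (hrange y),
    strictMono_Phi.le_iff_le, sub_div, mul_div_cancel_left₀ _ hσ.ne'] at hNP
  rw [norm_sub_rev]
  linarith

theorem lipschitz_phiInv_smoothed (d : ℕ) (σ : ℝ) (hσ : 0 < σ)
    (f : EuclideanSpace ℝ (Fin d) → ℝ) (hf : Measurable f)
    (hf01 : ∀ x, f x ∈ Set.Icc (0 : ℝ) 1)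
    (fhat : EuclideanSpace ℝ (Fin d) → ℝ)
    (hfhat : ∀ x, fhat x = ∫ η, f (x + η) ∂(gaussMeasure d σ))
    (hrange : ∀ x, fhat x ∈ Set.Ioo (0 : ℝ) 1) :
    ∀ x y : EuclideanSpace ℝ (Fin d),
      |PhiInv (fhat x) - PhiInv (fhat y)| ≤ (1 / σ) * ‖x - y‖ := by
  intro x y
  rw [abs_sub_le_iff, one_div_mul_eq_div]
  constructor
  · exact PhiInv_smoothed_sub_le hσ hf hf01 hfhat hrange x y
  · rw [norm_sub_rev]
    exact PhiInv_smoothed_sub_le hσ hf hf01 hfhat hrange y x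
end

section
/- Total loss surrogate property: if l_C(x,y) ≥ 1{g(x) ≠ y} and l_R(x,y) ≥ 1{g(x) = y and CR(g;x,y) < ε} pointwise, then l_C(x,y) + l_R(x,y) ≥ 1 − 1{CR(g;x,y) ≥ ε}, the 0/1 certified robust error. -/
open scoped Classical

theorem one_sub_certified_le_misclassified_add_nonrobust {X Y : Type*} (g : X → Y)
    (CR : X → Y → ℝ) (ε : ℝ) (x : X) (y : Y) :
    (1 - if ε ≤ CR x y then (1 : ℝ) else 0) ≤
      (if g x ≠ y then (1 : ℝ) else 0) + (if g x = y ∧ CR x y < ε then (1 : ℝ) else 0) := by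
  split_ifs <;> grind

theorem total_loss_surrogate_general {X Y : Type*} (g : X → Y) (CR : X → Y → ℝ)
    (ε : ℝ) (lC lR : X → Y → ℝ)
    (hlC : ∀ x y, (if g x ≠ y then (1 : ℝ) else 0) ≤ lC x y)
    (hlR : ∀ x y, (if g x = y ∧ CR x y < ε then (1 : ℝ) else 0) ≤ lR x y) :
    ∀ x y, (1 - if ε ≤ CR x y then (1 : ℝ) else 0) ≤ lC x y + lR x y := fun x y =>
  (one_sub_certified_le_misclassified_add_nonrobust g CR ε x y).trans
    (add_le_add (hlC x y) (hlR x y))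

theorem total_loss_surrogate {X Y : Type*} (g : X → Y) (CR : X → Y → ℝ)
    (hCRnonneg : ∀ x y, 0 ≤ CR x y)
    (hCRzero : ∀ x y, g x ≠ y → CR x y = 0)
    (ε : ℝ) (hε : 0 < ε) (lC lR : X → Y → ℝ)
    (hlC : ∀ x y, (if g x ≠ y then (1 : ℝ) else 0) ≤ lC x y)
    (hlR : ∀ x y, (if g x = y ∧ CR x y < ε then (1 : ℝ) else 0) ≤ lR x y) :
    ∀ x y, (1 - if ε ≤ CR x y then (1 : ℝ) else 0) ≤ lC x y + lR x y :=
  total_loss_surrogate_general g CR ε lC lR hlC hlR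
end
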